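/- Let G be an undirected graph on n vertices that is a disjoint union of complete components. Then for every symmetric positive definite n×n real matrix A, the matrix A_G obtained by setting a_{ij}=0 whenever (i,j) is not an edge of G (and i≠j) is positive definite. -/

import Mathlib

/-!
When every component of `G` is complete, `i = j ∨ G.Adj i j` says exactly that `i` and `j` lie
in the same component, so `A_G` is `A` with all entries between different components erased.
For such a block mask the quadratic form splits as `xᵀ A_G x = ∑ₖ x⁽ᵏ⁾ᵀ A x⁽ᵏ⁾`, where `x⁽ᵏ⁾`
is `x` restricted to the `k`-th component. Each summand is nonnegative since `A` is positive
definite, and the one for a component on which `x` does not vanish is positive.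
-/

/-- Thresholding a matrix with respect to a graph: keep entries on edges and the
diagonal, set everything else to zero. -/
def threshold {n : ℕ} (G : SimpleGraph (Fin n)) [DecidableRel G.Adj]
    (A : Matrix (Fin n) (Fin n) ℝ) : Matrix (Fin n) (Fin n) ℝ :=
  Matrix.of fun i j => if i = j ∨ G.Adj i j then A i j else 0

namespace Matrix

variable {ι κ R : Type*} [DecidableEq κ]

def blockMask [Zero R] (c : ι → κ) (A : Matrix ι ι R) : Matrix ι ι R :=
  of fun i j => if c i = c j then A i j else 0

variable [Ring R] [StarRing R]

theorem IsHermitian.blockMask {A : Matrix ι ι R} (hA : A.IsHermitian) (c : ι → κ) :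
    (A.blockMask c).IsHermitian := by
  ext i j
  simp only [Matrix.blockMask, conjTranspose_apply, of_apply, eq_comm (a := c j)]
  split_ifs <;> simp [hA.apply]

variable [Fintype ι] [Fintype κ]

theorem star_dotProduct_blockMask_mulVec (A : Matrix ι ι R) (c : ι → κ) (x : ι → R) :
    star x ⬝ᵥ (A.blockMask c *ᵥ x) =
      ∑ k : κ, star ((c ⁻¹' {k}).indicator x) ⬝ᵥ (A *ᵥ (c ⁻¹' {k}).indicator x) := by
  simp only [dotProduct, mulVec, Finset.mul_sum, Pi.star_apply]
  conv_rhs => rw [Finset.sum_comm]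
  refine Finset.sum_congr rfl fun i _ => ?_
  conv_rhs => rw [Finset.sum_comm]
  refine Finset.sum_congr rfl fun j _ => ?_
  rw [Fintype.sum_eq_single (c i) fun k hk => by
    simp [Set.indicator_of_notMem (show i ∉ c ⁻¹' {k} from Ne.symm hk)]]
  by_cases h : c i = c j
  · simp [blockMask, h]
  · simp [blockMask, h, Set.indicator_of_notMem (show j ∉ c ⁻¹' {c i} from Ne.symm h)]

theorem PosDef.blockMask [PartialOrder R] [IsOrderedCancelAddMonoid R] {A : Matrix ι ι R}
    (hA : A.PosDef) (c : ι → κ) : (A.blockMask c).PosDef := by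
  refine PosDef.of_dotProduct_mulVec_pos (hA.isHermitian.blockMask c) fun x hx => ?_
  obtain ⟨i, hi⟩ := Function.ne_iff.mp hx
  have hx_fiber : (c ⁻¹' {c i}).indicator x ≠ 0 := fun h => hi (by simpa using congrFun h i)
  rw [star_dotProduct_blockMask_mulVec]
  exact Finset.sum_pos' (fun k _ => hA.posSemidef.dotProduct_mulVec_nonneg _)
    ⟨c i, Finset.mem_univ _, hA.dotProduct_mulVec_pos hx_fiber⟩

end Matrix

theorem SimpleGraph.eq_or_adj_iff_reachable {V : Type*} {G : SimpleGraph V}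
    (hcomp : ∀ i j : V, i ≠ j → G.Reachable i j → G.Adj i j) {i j : V} :
    i = j ∨ G.Adj i j ↔ G.Reachable i j := by
  refine ⟨?_, fun h => or_iff_not_imp_left.mpr fun hij => hcomp i j hij h⟩
  rintro (rfl | hadj)
  exacts [Reachable.refl i, hadj.reachable]

theorem stmt_0 {n : ℕ} (G : SimpleGraph (Fin n)) [DecidableRel G.Adj]
    (hcomp : ∀ i j : Fin n, i ≠ j → G.Reachable i j → G.Adj i j)
    (A : Matrix (Fin n) (Fin n) ℝ) (hA : A.PosDef) :
    (threshold G A).PosDef := by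
  classical
  have hmask : threshold G A = A.blockMask G.connectedComponentMk := by
    ext i j
    simp only [threshold, Matrix.blockMask, Matrix.of_apply,
      G.eq_or_adj_iff_reachable hcomp, SimpleGraph.ConnectedComponent.eq]
  rw [hmask]
  exact hA.blockMask _
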